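/- arXiv:1811.07722 — 3 statements merged into one kernel-verified Lean document; each statement's English description precedes it below -/
import Mathlib

section
/- In a quantum Mealy machine M = (H_in, H_s, U, M), two states ρ₁, ρ₂ on H_s are equivalent on a set B of input density operators if and only if they are equivalent on span B: for all input sequences π with entries in B (resp. in span B) and all output sequences a, tr(E_{a|π}(ρ₁)) = tr(E_{a|π}(ρ₂)). -/
open Matrix Kronecker ComplexOrder

/-- Partial trace over the first (input) factor. -/
noncomputable def ptraceIn {α β : Type*} [Fintype α]
    (A : Matrix (α × β) (α × β) ℂ) : Matrix β β ℂ :=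
  fun s t => ∑ i, A (i, s) (i, t)

/-- One-step super-operator `E_{a|σ}` of a quantum Mealy machine `(H_in, H_s, U, M)`
with a general (density-operator) input `σ`:
`E_{a|σ}(ρ) = tr_{H_in}[(M_a ⊗ I) U (σ ⊗ ρ) U† (M_a† ⊗ I)]`. -/
noncomputable def stepD {α β O : Type*} [Fintype α] [Fintype β] [DecidableEq β]
    (U : Matrix (α × β) (α × β) ℂ) (M : O → Matrix α α ℂ)
    (σ : Matrix α α ℂ) (a : O) (ρ : Matrix β β ℂ) : Matrix β β ℂ :=
  ptraceIn ((M a ⊗ₖ (1 : Matrix β β ℂ)) * U * (σ ⊗ₖ ρ) * Uᴴ *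
    ((M a)ᴴ ⊗ₖ (1 : Matrix β β ℂ)))

/-- One-step super-operator `E_{a,φ}` with a pure input state `|φ⟩`. -/
noncomputable def stepP {α β O : Type*} [Fintype α] [Fintype β] [DecidableEq β]
    (U : Matrix (α × β) (α × β) ℂ) (M : O → Matrix α α ℂ)
    (φ : α → ℂ) (a : O) (ρ : Matrix β β ℂ) : Matrix β β ℂ :=
  stepD U M (vecMulVec φ (star φ)) a ρ

/-- `E_{a|π}` for an input sequence of density operators paired with outcomes. -/
noncomputable def runD {α β O : Type*} [Fintype α] [Fintype β] [DecidableEq β]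
    (U : Matrix (α × β) (α × β) ℂ) (M : O → Matrix α α ℂ)
    (l : List (Matrix α α ℂ × O)) (ρ : Matrix β β ℂ) : Matrix β β ℂ :=
  l.foldl (fun acc p => stepD U M p.1 p.2 acc) ρ

/-- `E_{a|π}` for an input sequence of pure states paired with outcomes. -/
noncomputable def runP {α β O : Type*} [Fintype α] [Fintype β] [DecidableEq β]
    (U : Matrix (α × β) (α × β) ℂ) (M : O → Matrix α α ℂ)
    (l : List ((α → ℂ) × O)) (ρ : Matrix β β ℂ) : Matrix β β ℂ :=
  l.foldl (fun acc p => stepP U M p.1 p.2 acc) ρ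

/-!
Every `E_{a|σ}` is linear in the input `σ` and in the state, so for a fixed tail of inputs the
probability `tr E_{a|π}(ρ)` is a linear functional of the first input. Inducting on the input
sequence, the functionals for `ρ₁` and `ρ₂` agree on `B` (by equivalence on `B`, using the
induction hypothesis for the shifted states), hence on `span B`.
-/

section Linearity

lemma ptraceIn_add {α β : Type*} [Fintype α] (A B : Matrix (α × β) (α × β) ℂ) :
    ptraceIn (A + B) = ptraceIn A + ptraceIn B := by
  ext s t; simp [ptraceIn, Finset.sum_add_distrib]

lemma ptraceIn_smul {α β : Type*} [Fintype α] (c : ℂ) (A : Matrix (α × β) (α × β) ℂ) :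
    ptraceIn (c • A) = c • ptraceIn A := by
  ext s t; simp [ptraceIn, Finset.mul_sum]

variable {α β O : Type*} [Fintype α] [Fintype β] [DecidableEq β]

@[simp]
lemma runD_cons (U : Matrix (α × β) (α × β) ℂ) (M : O → Matrix α α ℂ) (p : Matrix α α ℂ × O)
    (l : List (Matrix α α ℂ × O)) (ρ : Matrix β β ℂ) :
    runD U M (p :: l) ρ = runD U M l (stepD U M p.1 p.2 ρ) :=
  rfl

noncomputable def stepDBilin (U : Matrix (α × β) (α × β) ℂ) (M : O → Matrix α α ℂ) (a : O) :
    Matrix α α ℂ →ₗ[ℂ] Matrix β β ℂ →ₗ[ℂ] Matrix β β ℂ :=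
  LinearMap.mk₂ ℂ (fun σ ρ => stepD U M σ a ρ)
    (fun _ _ _ => by simp [stepD, add_kronecker, Matrix.mul_add, Matrix.add_mul, ptraceIn_add])
    (fun _ _ _ => by simp [stepD, smul_kronecker, ptraceIn_smul])
    (fun _ _ _ => by simp [stepD, kronecker_add, Matrix.mul_add, Matrix.add_mul, ptraceIn_add])
    (fun _ _ _ => by simp [stepD, kronecker_smul, ptraceIn_smul])

@[simp]
lemma stepDBilin_apply (U : Matrix (α × β) (α × β) ℂ) (M : O → Matrix α α ℂ) (a : O)
    (σ : Matrix α α ℂ) (ρ : Matrix β β ℂ) : stepDBilin U M a σ ρ = stepD U M σ a ρ :=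
  rfl

noncomputable def runDLinear (U : Matrix (α × β) (α × β) ℂ) (M : O → Matrix α α ℂ) :
    List (Matrix α α ℂ × O) → Matrix β β ℂ →ₗ[ℂ] Matrix β β ℂ
  | [] => LinearMap.id
  | p :: l => runDLinear U M l ∘ₗ stepDBilin U M p.2 p.1

@[simp]
lemma runDLinear_apply (U : Matrix (α × β) (α × β) ℂ) (M : O → Matrix α α ℂ)
    (l : List (Matrix α α ℂ × O)) (ρ : Matrix β β ℂ) : runDLinear U M l ρ = runD U M l ρ := by
  induction l generalizing ρ with
  | nil => rfl
  | cons p l ih => exact ih _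

end Linearity

section Equivalence

variable {α β O : Type*} [Fintype α] [Fintype β] [DecidableEq β]
  (U : Matrix (α × β) (α × β) ℂ) (M : O → Matrix α α ℂ)

def EquivOn (S : Set (Matrix α α ℂ)) (ρ ρ' : Matrix β β ℂ) : Prop :=
  ∀ l : List (Matrix α α ℂ × O), (∀ p ∈ l, p.1 ∈ S) →
    (runD U M l ρ).trace = (runD U M l ρ').trace

variable {U M}

lemma EquivOn.stepD {S : Set (Matrix α α ℂ)} {ρ ρ' : Matrix β β ℂ} (h : EquivOn U M S ρ ρ')
    {σ : Matrix α α ℂ} (hσ : σ ∈ S) (a : O) :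
    EquivOn U M S (stepD U M σ a ρ) (stepD U M σ a ρ') := fun l hl =>
  h ((σ, a) :: l) (List.forall_mem_cons.2 ⟨hσ, hl⟩)

lemma EquivOn.mono {S T : Set (Matrix α α ℂ)} (hST : S ⊆ T) {ρ ρ' : Matrix β β ℂ}
    (h : EquivOn U M T ρ ρ') : EquivOn U M S ρ ρ' := fun l hl =>
  h l fun p hp => hST (hl p hp)

lemma EquivOn.span {B : Set (Matrix α α ℂ)} {ρ ρ' : Matrix β β ℂ} (h : EquivOn U M B ρ ρ') :
    EquivOn U M (Submodule.span ℂ B) ρ ρ' := by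
  intro l
  induction l generalizing ρ ρ' with
  | nil => exact fun _ => h [] (by simp)
  | cons p l ih =>
    obtain ⟨σ, a⟩ := p
    intro hl
    rw [List.forall_mem_cons] at hl
    let probAfter (ρ : Matrix β β ℂ) : Matrix α α ℂ →ₗ[ℂ] ℂ :=
      traceLinearMap β ℂ ℂ ∘ₗ runDLinear U M l ∘ₗ (stepDBilin U M a).flip ρ
    have hB : Set.EqOn (probAfter ρ) (probAfter ρ') B := fun τ hτ => by
      simpa [probAfter] using ih (h.stepD hτ a) hl.2
    simpa [probAfter] using LinearMap.eqOn_span' hB hl.1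

lemma equivOn_span_iff {B : Set (Matrix α α ℂ)} {ρ ρ' : Matrix β β ℂ} :
    EquivOn U M (Submodule.span ℂ B) ρ ρ' ↔ EquivOn U M B ρ ρ' :=
  ⟨EquivOn.mono Submodule.subset_span, EquivOn.span⟩

end Equivalence

theorem equiv_on_B_iff_equiv_on_span_general (di ds : ℕ) (O : Type)
    (U : Matrix (Fin di × Fin ds) (Fin di × Fin ds) ℂ)
    (M : O → Matrix (Fin di) (Fin di) ℂ)
    (ρ₁ ρ₂ : Matrix (Fin ds) (Fin ds) ℂ)
    (B : Set (Matrix (Fin di) (Fin di) ℂ)) :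
    (∀ l : List (Matrix (Fin di) (Fin di) ℂ × O), (∀ p ∈ l, p.1 ∈ B) →
        (runD U M l ρ₁).trace = (runD U M l ρ₂).trace) ↔
    (∀ l : List (Matrix (Fin di) (Fin di) ℂ × O),
        (∀ p ∈ l, p.1 ∈ Submodule.span ℂ B) →
        (runD U M l ρ₁).trace = (runD U M l ρ₂).trace) :=
  equivOn_span_iff.symm

/-- Two states of a quantum Mealy machine are equivalent on a finite set `B` of input
density operators iff they are equivalent on `span B`. -/
theorem equiv_on_B_iff_equiv_on_span (di ds : ℕ) (O : Type) [Fintype O]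
    (U : Matrix (Fin di × Fin ds) (Fin di × Fin ds) ℂ)
    (hU : U ∈ Matrix.unitaryGroup (Fin di × Fin ds) ℂ)
    (M : O → Matrix (Fin di) (Fin di) ℂ) (hM : ∑ a, (M a)ᴴ * M a = 1)
    (ρ₁ ρ₂ : Matrix (Fin ds) (Fin ds) ℂ)
    (hρ₁ : ρ₁.PosSemidef) (ht₁ : ρ₁.trace = 1)
    (hρ₂ : ρ₂.PosSemidef) (ht₂ : ρ₂.trace = 1)
    (B : Set (Matrix (Fin di) (Fin di) ℂ)) (hBfin : B.Finite)
    (hB : ∀ σ ∈ B, σ.PosSemidef ∧ σ.trace = 1) :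
    (∀ l : List (Matrix (Fin di) (Fin di) ℂ × O), (∀ p ∈ l, p.1 ∈ B) →
        (runD U M l ρ₁).trace = (runD U M l ρ₂).trace) ↔
    (∀ l : List (Matrix (Fin di) (Fin di) ℂ × O),
        (∀ p ∈ l, p.1 ∈ Submodule.span ℂ B) →
        (runD U M l ρ₁).trace = (runD U M l ρ₂).trace) :=
  equiv_on_B_iff_equiv_on_span_general di ds O U M ρ₁ ρ₂ B
end

section
/- Two quantum Mealy machines M₁ and M₂ with the same input space and output set, with initial states ρ₁ and ρ₂ respectively, are functionally equivalent if and only if the states ρ₁ ⊕ 0 and 0 ⊕ ρ₂ are equivalent in the direct-sum machine M₁ ⊕ M₂. -/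
open Matrix Kronecker ComplexOrder

/-- The direct sum `U₁ ⊕ U₂`, viewed as an operator on `H_in ⊗ (H_s⁽¹⁾ ⊕ H_s⁽²⁾)` via the
isomorphism `H_in ⊗ (H₁ ⊕ H₂) ≅ (H_in ⊗ H₁) ⊕ (H_in ⊗ H₂)`. -/
noncomputable def Usum {α β₁ β₂ : Type*}
    (U₁ : Matrix (α × β₁) (α × β₁) ℂ) (U₂ : Matrix (α × β₂) (α × β₂) ℂ) :
    Matrix (α × (β₁ ⊕ β₂)) (α × (β₁ ⊕ β₂)) ℂ :=
  Matrix.reindex (Equiv.prodSumDistrib α β₁ β₂).symm (Equiv.prodSumDistrib α β₁ β₂).symm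
    (Matrix.fromBlocks U₁ 0 0 U₂)

/-!
Since `U₁ ⊕ U₂` does not mix the two summands of the state space, every super-operator
`E_{a,φ}` of `M₁ ⊕ M₂` maps a block-diagonal state `ρ ⊕ ρ'` to `E⁽¹⁾_{a,φ}(ρ) ⊕ E⁽²⁾_{a,φ}(ρ')`.
Hence the output probabilities of `ρ₁ ⊕ 0` and `0 ⊕ ρ₂` in the sum machine are those of
`ρ₁` in `M₁` and of `ρ₂` in `M₂`, the zero state staying zero.
-/

section DirectSum

variable {α β₁ β₂ O : Type*}

theorem Matrix.trace_fromBlocks_zero_zero {R : Type*} [AddCommMonoid R] [Fintype β₁]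
    [Fintype β₂] (A : Matrix β₁ β₁ R) (B : Matrix β₂ β₂ R) :
    (fromBlocks A 0 0 B).trace = A.trace + B.trace := by
  simp [trace, Fintype.sum_sum_type]

theorem Matrix.reindex_mul_reindex {m n R : Type*} [Fintype m] [Fintype n]
    [NonUnitalNonAssocSemiring R] (e : m ≃ n) (A B : Matrix m m R) :
    reindex e e A * reindex e e B = reindex e e (A * B) := by
  simp [reindex_apply, submatrix_mul_equiv]

theorem Matrix.kronecker_fromBlocks_zero_zero {R : Type*} [MulZeroClass R] (A : Matrix α α R)
    (B : Matrix β₁ β₁ R) (C : Matrix β₂ β₂ R) :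
    A ⊗ₖ fromBlocks B 0 0 C =
      reindex (Equiv.prodSumDistrib α β₁ β₂).symm (Equiv.prodSumDistrib α β₁ β₂).symm
        (fromBlocks (A ⊗ₖ B) 0 0 (A ⊗ₖ C)) := by
  ext ⟨i, s⟩ ⟨j, t⟩
  cases s <;> cases t <;> simp [fromBlocks, kroneckerMap_apply]

theorem ptraceIn_reindex_fromBlocks_zero_zero [Fintype α] (X : Matrix (α × β₁) (α × β₁) ℂ)
    (Y : Matrix (α × β₂) (α × β₂) ℂ) :
    ptraceIn (reindex (Equiv.prodSumDistrib α β₁ β₂).symm (Equiv.prodSumDistrib α β₁ β₂).symm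
        (fromBlocks X 0 0 Y)) =
      fromBlocks (ptraceIn X) 0 0 (ptraceIn Y) := by
  ext s t
  cases s <;> cases t <;> simp [ptraceIn, fromBlocks]

variable [Fintype α] [Fintype β₁] [Fintype β₂] [DecidableEq β₁] [DecidableEq β₂]

theorem stepD_Usum_fromBlocks (U₁ : Matrix (α × β₁) (α × β₁) ℂ)
    (U₂ : Matrix (α × β₂) (α × β₂) ℂ) (M : O → Matrix α α ℂ) (σ : Matrix α α ℂ) (a : O)
    (ρ : Matrix β₁ β₁ ℂ) (ρ' : Matrix β₂ β₂ ℂ) :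
    stepD (Usum U₁ U₂) M σ a (fromBlocks ρ 0 0 ρ') =
      fromBlocks (stepD U₁ M σ a ρ) 0 0 (stepD U₂ M σ a ρ') := by
  rw [stepD, ← fromBlocks_one (l := β₁) (m := β₂), kronecker_fromBlocks_zero_zero,
    kronecker_fromBlocks_zero_zero, kronecker_fromBlocks_zero_zero, Usum, conjTranspose_reindex,
    fromBlocks_conjTranspose]
  simp only [reindex_mul_reindex, fromBlocks_multiply, conjTranspose_zero,
    Matrix.mul_zero, Matrix.zero_mul, add_zero, zero_add]
  exact ptraceIn_reindex_fromBlocks_zero_zero _ _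

theorem stepD_zero (U : Matrix (α × β₁) (α × β₁) ℂ) (M : O → Matrix α α ℂ)
    (σ : Matrix α α ℂ) (a : O) : stepD U M σ a 0 = 0 := by
  ext s t
  simp [stepD, ptraceIn]

theorem runP_Usum_fromBlocks (U₁ : Matrix (α × β₁) (α × β₁) ℂ)
    (U₂ : Matrix (α × β₂) (α × β₂) ℂ) (M : O → Matrix α α ℂ) (l : List ((α → ℂ) × O))
    (ρ : Matrix β₁ β₁ ℂ) (ρ' : Matrix β₂ β₂ ℂ) :
    runP (Usum U₁ U₂) M l (fromBlocks ρ 0 0 ρ') =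
      fromBlocks (runP U₁ M l ρ) 0 0 (runP U₂ M l ρ') :=
  List.foldl_hom₂ l (fun ρ ρ' => fromBlocks ρ 0 0 ρ') _ _ _ ρ ρ' fun _ _ p =>
    (stepD_Usum_fromBlocks U₁ U₂ M _ p.2 _ _).symm

theorem runP_zero (U : Matrix (α × β₁) (α × β₁) ℂ) (M : O → Matrix α α ℂ)
    (l : List ((α → ℂ) × O)) : runP U M l 0 = 0 :=
  List.foldl_fixed' (fun p => stepD_zero U M _ p.2) l

theorem trace_runP_Usum_fromBlocks (U₁ : Matrix (α × β₁) (α × β₁) ℂ)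
    (U₂ : Matrix (α × β₂) (α × β₂) ℂ) (M : O → Matrix α α ℂ) (l : List ((α → ℂ) × O))
    (ρ : Matrix β₁ β₁ ℂ) (ρ' : Matrix β₂ β₂ ℂ) :
    (runP (Usum U₁ U₂) M l (fromBlocks ρ 0 0 ρ')).trace =
      (runP U₁ M l ρ).trace + (runP U₂ M l ρ').trace := by
  rw [runP_Usum_fromBlocks, trace_fromBlocks_zero_zero]

end DirectSum

theorem equiv_iff_equiv_in_sum_machine_general (di d₁ d₂ : ℕ) (O : Type)
    (U₁ : Matrix (Fin di × Fin d₁) (Fin di × Fin d₁) ℂ)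
    (U₂ : Matrix (Fin di × Fin d₂) (Fin di × Fin d₂) ℂ)
    (M : O → Matrix (Fin di) (Fin di) ℂ)
    (ρ₁ : Matrix (Fin d₁) (Fin d₁) ℂ) (ρ₂ : Matrix (Fin d₂) (Fin d₂) ℂ) :
    (∀ l : List ((Fin di → ℂ) × O), (∀ p ∈ l, ∑ i, ‖p.1 i‖ ^ 2 = 1) →
        (runP U₁ M l ρ₁).trace = (runP U₂ M l ρ₂).trace) ↔
    (∀ l : List ((Fin di → ℂ) × O), (∀ p ∈ l, ∑ i, ‖p.1 i‖ ^ 2 = 1) →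
        (runP (Usum U₁ U₂) M l (Matrix.fromBlocks ρ₁ 0 0 0)).trace =
        (runP (Usum U₁ U₂) M l (Matrix.fromBlocks 0 0 0 ρ₂)).trace) := by
  simp only [trace_runP_Usum_fromBlocks, runP_zero, trace_zero, add_zero, zero_add]

/-- Two quantum Mealy machines with shared input space, measurement and output set are
functionally equivalent with initial states `ρ₁`, `ρ₂` iff the states `ρ₁ ⊕ 0` and
`0 ⊕ ρ₂` are equivalent in the direct-sum machine `M₁ ⊕ M₂`. -/
theorem equiv_iff_equiv_in_sum_machine (di d₁ d₂ : ℕ) (O : Type) [Fintype O]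
    (U₁ : Matrix (Fin di × Fin d₁) (Fin di × Fin d₁) ℂ)
    (U₂ : Matrix (Fin di × Fin d₂) (Fin di × Fin d₂) ℂ)
    (hU₁ : U₁ ∈ Matrix.unitaryGroup (Fin di × Fin d₁) ℂ)
    (hU₂ : U₂ ∈ Matrix.unitaryGroup (Fin di × Fin d₂) ℂ)
    (M : O → Matrix (Fin di) (Fin di) ℂ) (hM : ∑ a, (M a)ᴴ * M a = 1)
    (ρ₁ : Matrix (Fin d₁) (Fin d₁) ℂ) (ρ₂ : Matrix (Fin d₂) (Fin d₂) ℂ)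
    (hρ₁ : ρ₁.PosSemidef) (ht₁ : ρ₁.trace = 1)
    (hρ₂ : ρ₂.PosSemidef) (ht₂ : ρ₂.trace = 1) :
    (∀ l : List ((Fin di → ℂ) × O), (∀ p ∈ l, ∑ i, ‖p.1 i‖ ^ 2 = 1) →
        (runP U₁ M l ρ₁).trace = (runP U₂ M l ρ₂).trace) ↔
    (∀ l : List ((Fin di → ℂ) × O), (∀ p ∈ l, ∑ i, ‖p.1 i‖ ^ 2 = 1) →
        (runP (Usum U₁ U₂) M l (Matrix.fromBlocks ρ₁ 0 0 0)).trace =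
        (runP (Usum U₁ U₂) M l (Matrix.fromBlocks 0 0 0 ρ₂)).trace) :=
  equiv_iff_equiv_in_sum_machine_general di d₁ d₂ O U₁ U₂ M ρ₁ ρ₂
end

section
/- Let M₁, M₂ be quantum Mealy machines with state space dimensions d₁, d₂, shared input space and outputs. Then (M₁,ρ₁) ~ (M₂,ρ₂) (full equivalence) if and only if (M₁,ρ₁) ~_{d₁²+d₂²−1} (M₂,ρ₂) (equivalence on all input sequences of length at most d₁²+d₂²−1). -/
open Matrix Kronecker ComplexOrder

open Module

/-!
Pair the two machines into one machine on `Mat d₁ × Mat d₂`, whose step maps are the block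
diagonal `E₁ × E₂`; the outputs agree on a word iff the functional `tr ∘ fst − tr ∘ snd` kills
the paired state reached by it. The spans `V k` of the states reached by words of length `< k`
form an increasing chain in which `V k = V (k + 1)` forces `V (k + 1) = V (k + 2)`, since every
word of length `k + 1` is a word of length `k` followed by one more letter. A strictly
increasing stretch of the chain raises the dimension at each step, so the chain is constant
from `d₁² + d₂²` on, and a functional vanishing on words of length `< d₁² + d₂²` vanishes on all.
-/

namespace Submodule

variable {K W : Type*} [Field K] [AddCommGroup W] [Module K W]

theorem le_finrank_of_monotone_of_eq_succ [FiniteDimensional K W] {V : ℕ → Submodule K W}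
    (hV : Monotone V) (hstable : ∀ k, V k = V (k + 1) → V (k + 1) = V (k + 2)) (n : ℕ) :
    V n ≤ V (finrank K W) := by
  set N := finrank K W
  obtain ⟨k, hkN, hk⟩ : ∃ k ≤ N, V k = V (k + 1) := by
    by_contra! hchain
    have hgrow : ∀ k ≤ N + 1, k ≤ finrank K (V k) := by
      intro k hk
      induction k with
      | zero => exact Nat.zero_le _
      | succ k ih =>
        have hlt : finrank K (V k) < finrank K (V (k + 1)) :=
          finrank_lt_finrank_of_lt ((hV k.le_succ).lt_of_ne (hchain k (by omega)))
        have := ih (by omega)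
        omega
    have := hgrow (N + 1) le_rfl
    have := finrank_le (V (N + 1))
    omega
  have hsucc : ∀ m, k ≤ m → V m = V (m + 1) :=
    Nat.le_induction hk fun m _ ih => hstable m ih
  have hconst : ∀ m, k ≤ m → V m = V k :=
    Nat.le_induction rfl fun m hm ih => (hsucc m hm).symm.trans ih
  calc V n ≤ V (max n N) := hV (le_max_left n N)
    _ = V k := hconst _ (by omega)
    _ = V N := (hconst N hkN).symm

variable {P : Type*} (L : P → W →ₗ[K] W) (Q : P → Prop) (x₀ : W)

def reachSpan (k : ℕ) : Submodule K W :=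
  span K {x | ∃ l : List P, (∀ p ∈ l, Q p) ∧ l.length < k ∧ l.foldl (fun x p => L p x) x₀ = x}

variable {L Q x₀}

theorem foldl_mem_reachSpan {l : List P} (hl : ∀ p ∈ l, Q p) {k : ℕ} (hk : l.length < k) :
    l.foldl (fun x p => L p x) x₀ ∈ reachSpan L Q x₀ k :=
  subset_span ⟨l, hl, hk, rfl⟩

theorem reachSpan_mono : Monotone (reachSpan L Q x₀) := fun _ _ hkm =>
  span_mono fun _ ⟨l, hl, hk, hx⟩ => ⟨l, hl, hk.trans_le hkm, hx⟩

theorem map_reachSpan_le {p : P} (hp : Q p) (k : ℕ) :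
    (reachSpan L Q x₀ k).map (L p) ≤ reachSpan L Q x₀ (k + 1) := by
  rw [reachSpan, map_span, span_le]
  rintro _ ⟨_, ⟨l, hl, hk, rfl⟩, rfl⟩
  have hl' : ∀ q ∈ l ++ [p], Q q := by
    simpa only [List.mem_append, List.mem_singleton, or_imp, forall_and, forall_eq] using
      ⟨hl, hp⟩
  simpa using foldl_mem_reachSpan hl' (by simpa using hk)

theorem reachSpan_succ_eq_of_eq {k : ℕ} (hk : reachSpan L Q x₀ k = reachSpan L Q x₀ (k + 1)) :
    reachSpan L Q x₀ (k + 1) = reachSpan L Q x₀ (k + 2) := by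
  refine le_antisymm (reachSpan_mono (by omega)) (span_le.mpr ?_)
  rintro _ ⟨l, hl, hlen, rfl⟩
  rcases List.eq_nil_or_concat l with rfl | ⟨l', p, rfl⟩
  · exact foldl_mem_reachSpan hl (by simp)
  · simp only [List.concat_eq_append, List.mem_append, List.mem_singleton, or_imp,
      forall_and, forall_eq] at hl
    have hl' : l'.foldl (fun x p => L p x) x₀ ∈ reachSpan L Q x₀ k :=
      hk ▸ foldl_mem_reachSpan hl.1 (by simpa using hlen)
    simpa using map_reachSpan_le hl.2 k (mem_map_of_mem hl')

theorem foldl_mem_reachSpan_finrank [FiniteDimensional K W] {l : List P}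
    (hl : ∀ p ∈ l, Q p) : l.foldl (fun x p => L p x) x₀ ∈ reachSpan L Q x₀ (finrank K W) :=
  le_finrank_of_monotone_of_eq_succ reachSpan_mono (fun _ => reachSpan_succ_eq_of_eq) _
    (foldl_mem_reachSpan hl (Nat.lt_succ_self _))

theorem apply_foldl_eq_zero_of_length_lt_finrank [FiniteDimensional K W] (f : W →ₗ[K] K)
    (hf : ∀ l : List P, (∀ p ∈ l, Q p) → l.length < finrank K W →
      f (l.foldl (fun x p => L p x) x₀) = 0)
    {l : List P} (hl : ∀ p ∈ l, Q p) : f (l.foldl (fun x p => L p x) x₀) = 0 := by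
  have hker : reachSpan L Q x₀ (finrank K W) ≤ LinearMap.ker f := by
    rw [reachSpan, span_le]
    rintro _ ⟨l, hl, hk, rfl⟩
    exact hf l hl hk
  exact hker (foldl_mem_reachSpan_finrank hl)

end Submodule

theorem List.foldl_prodMap {R P W₁ W₂ : Type*} [Semiring R] [AddCommMonoid W₁] [Module R W₁]
    [AddCommMonoid W₂] [Module R W₂] (L₁ : P → W₁ →ₗ[R] W₁) (L₂ : P → W₂ →ₗ[R] W₂)
    (l : List P) (x : W₁ × W₂) :
    l.foldl (fun x p => (L₁ p).prodMap (L₂ p) x) x =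
      (l.foldl (fun x p => L₁ p x) x.1, l.foldl (fun x p => L₂ p x) x.2) := by
  induction l generalizing x with
  | nil => rfl
  | cons p l ih => exact ih _

noncomputable def stepPLinearMap {α β O : Type*} [Fintype α] [Fintype β] [DecidableEq β]
    (U : Matrix (α × β) (α × β) ℂ) (M : O → Matrix α α ℂ)
    (φ : α → ℂ) (a : O) : Matrix β β ℂ →ₗ[ℂ] Matrix β β ℂ where
  toFun := stepP U M φ a
  map_add' ρ ρ' := by
    simp only [stepP, stepD, Matrix.kronecker_add, mul_add, add_mul]
    funext s t
    simp [ptraceIn, Finset.sum_add_distrib]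
  map_smul' c ρ := by
    simp only [stepP, stepD, Matrix.kronecker_smul, Matrix.mul_smul, Matrix.smul_mul,
      RingHom.id_apply]
    funext s t
    simp [ptraceIn, Finset.mul_sum]

theorem equiv_iff_bounded_equiv_general (di d₁ d₂ : ℕ) (O : Type)
    (U₁ : Matrix (Fin di × Fin d₁) (Fin di × Fin d₁) ℂ)
    (U₂ : Matrix (Fin di × Fin d₂) (Fin di × Fin d₂) ℂ)
    (M : O → Matrix (Fin di) (Fin di) ℂ)
    (ρ₁ : Matrix (Fin d₁) (Fin d₁) ℂ) (ρ₂ : Matrix (Fin d₂) (Fin d₂) ℂ) :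
    (∀ l : List ((Fin di → ℂ) × O), (∀ p ∈ l, ∑ i, ‖p.1 i‖ ^ 2 = 1) →
        (runP U₁ M l ρ₁).trace = (runP U₂ M l ρ₂).trace) ↔
    (∀ l : List ((Fin di → ℂ) × O), (∀ p ∈ l, ∑ i, ‖p.1 i‖ ^ 2 = 1) →
        l.length ≤ d₁ ^ 2 + d₂ ^ 2 - 1 →
        (runP U₁ M l ρ₁).trace = (runP U₂ M l ρ₂).trace) := by
  refine ⟨fun h l hl _ => h l hl, fun h l hl => ?_⟩
  let f := (traceLinearMap (Fin d₁) ℂ ℂ).comp (LinearMap.fst ℂ _ _) -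
    (traceLinearMap (Fin d₂) ℂ ℂ).comp (LinearMap.snd ℂ _ _)
  have hf : ∀ l : List ((Fin di → ℂ) × O),
      f (l.foldl (fun x p => (stepPLinearMap U₁ M p.1 p.2).prodMap
        (stepPLinearMap U₂ M p.1 p.2) x) (ρ₁, ρ₂)) =
        (runP U₁ M l ρ₁).trace - (runP U₂ M l ρ₂).trace := fun l => by
    rw [List.foldl_prodMap]
    rfl
  have hdim : finrank ℂ (Matrix (Fin d₁) (Fin d₁) ℂ × Matrix (Fin d₂) (Fin d₂) ℂ) =
      d₁ ^ 2 + d₂ ^ 2 := by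
    simp [finrank_prod, finrank_matrix, sq]
  rw [← sub_eq_zero, ← hf]
  refine Submodule.apply_foldl_eq_zero_of_length_lt_finrank f (fun l hl hlen => ?_) hl
  rw [hf, sub_eq_zero]
  exact h l hl (by omega)

/-- Main theorem: two quantum Mealy machines with state-space dimensions `d₁, d₂` are
functionally equivalent iff they are `(d₁² + d₂² − 1)`-equivalent. -/
theorem equiv_iff_bounded_equiv (di d₁ d₂ : ℕ) (O : Type) [Fintype O]
    (U₁ : Matrix (Fin di × Fin d₁) (Fin di × Fin d₁) ℂ)
    (U₂ : Matrix (Fin di × Fin d₂) (Fin di × Fin d₂) ℂ)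
    (hU₁ : U₁ ∈ Matrix.unitaryGroup (Fin di × Fin d₁) ℂ)
    (hU₂ : U₂ ∈ Matrix.unitaryGroup (Fin di × Fin d₂) ℂ)
    (M : O → Matrix (Fin di) (Fin di) ℂ) (hM : ∑ a, (M a)ᴴ * M a = 1)
    (ρ₁ : Matrix (Fin d₁) (Fin d₁) ℂ) (ρ₂ : Matrix (Fin d₂) (Fin d₂) ℂ)
    (hρ₁ : ρ₁.PosSemidef) (ht₁ : ρ₁.trace = 1)
    (hρ₂ : ρ₂.PosSemidef) (ht₂ : ρ₂.trace = 1) :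
    (∀ l : List ((Fin di → ℂ) × O), (∀ p ∈ l, ∑ i, ‖p.1 i‖ ^ 2 = 1) →
        (runP U₁ M l ρ₁).trace = (runP U₂ M l ρ₂).trace) ↔
    (∀ l : List ((Fin di → ℂ) × O), (∀ p ∈ l, ∑ i, ‖p.1 i‖ ^ 2 = 1) →
        l.length ≤ d₁ ^ 2 + d₂ ^ 2 - 1 →
        (runP U₁ M l ρ₁).trace = (runP U₂ M l ρ₂).trace) :=
  equiv_iff_bounded_equiv_general di d₁ d₂ O U₁ U₂ M ρ₁ ρ₂
end
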